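/- arXiv:1912.12927 — 3 statements merged into one kernel-verified Lean document; each statement's English description precedes it below -/
import Mathlib

section
/- Let k ≥ 2 and let q : Fin k → ℝ be a class-posterior vector (q ≥ 0, Σ_y q(y) = 1). Let w : {1,…,k−1} → ℝ be nonnegative with Σ_{j=1}^{k−1} w_j = 1. For each j and each subset Ȳ ⊆ Fin k with |Ȳ| = j define p̄_j(Ȳ) = (1/C(k−1,j)) Σ_{y' ∉ Ȳ} q(y'). Then for every label y ∈ Fin k: q(y) = 1 − Σ_{j=1}^{k−1} ( (k−1)/j · Σ_{Ȳ : |Ȳ|=j, y ∈ Ȳ} w_j · p̄_j(Ȳ) ). (Lemma 2: the ordinary label distribution expressed via the MCL distribution.) -/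
open Finset

lemma count_aux (k j : ℕ) (hj : 1 ≤ j) (y y' : Fin k) (hne : y' ≠ y) :
    (((Finset.univ : Finset (Fin k)).powersetCard j).filter
      (fun Y => y ∈ Y ∧ y' ∉ Y)).card = (k - 2).choose (j - 1) := by
  have hcard2 : ({y, y'} : Finset (Fin k)).card = 2 := by
    rw [Finset.card_insert_of_notMem (by simpa using hne.symm), Finset.card_singleton]
  have hcc : (({y, y'}ᶜ : Finset (Fin k))).card = k - 2 := by
    rw [Finset.card_compl, hcard2]; simp
  have hb : (((Finset.univ : Finset (Fin k)).powersetCard j).filter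
      (fun Y => y ∈ Y ∧ y' ∉ Y)).card
      = ((({y, y'}ᶜ : Finset (Fin k))).powersetCard (j-1)).card := by
    apply Finset.card_bij (fun Y _ => Y.erase y)
    · intro Y hY
      simp only [Finset.mem_filter, Finset.mem_powersetCard] at hY ⊢
      obtain ⟨⟨_, hcard⟩, hyY, hy'Y⟩ := hY
      constructor
      · intro a ha
        rw [Finset.mem_erase] at ha
        rw [Finset.mem_compl, Finset.mem_insert, Finset.mem_singleton]
        push_neg
        exact ⟨ha.1, fun h => hy'Y (h ▸ ha.2)⟩
      · rw [Finset.card_erase_of_mem hyY, hcard]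
    · intro Y1 h1 Y2 h2 he
      simp only [Finset.mem_filter] at h1 h2
      have := congrArg (insert y) he
      rwa [Finset.insert_erase h1.2.1, Finset.insert_erase h2.2.1] at this
    · intro A hA
      simp only [Finset.mem_powersetCard] at hA
      have hyA : y ∉ A := fun h => by
        have := hA.1 h
        simp at this
      have hy'A : y' ∉ A := fun h => by
        have := hA.1 h
        simp at this
      refine ⟨insert y A, ?_, by rw [Finset.erase_insert hyA]⟩
      simp only [Finset.mem_filter, Finset.mem_powersetCard]
      refine ⟨⟨Finset.subset_univ _, ?_⟩, Finset.mem_insert_self _ _, ?_⟩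
      · rw [Finset.card_insert_of_notMem hyA, hA.2]; omega
      · intro h
        rcases Finset.mem_insert.mp h with h | h
        · exact hne h
        · exact hy'A h
  rw [hb, Finset.card_powersetCard, hcc]

/-- **Lemma 2**: the ordinary class-posterior can be recovered from the MCL
distribution: for every label `y`,
`q(y) = 1 − ∑_{j=1}^{k−1} ((k−1)/j) ∑_{Ȳ : |Ȳ| = j, y ∈ Ȳ} w j · p̄_j(Ȳ)`,
where `p̄_j(Ȳ) = (1/C(k−1,j)) ∑_{y' ∉ Ȳ} q(y')`. -/
theorem stmt6 (k : ℕ) (hk : 2 ≤ k) (q : Fin k → ℝ)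
    (hq : ∀ y, 0 ≤ q y) (hqsum : ∑ y, q y = 1)
    (w : ℕ → ℝ) (hw : ∀ j ∈ Finset.Icc 1 (k - 1), 0 ≤ w j)
    (hwsum : ∑ j ∈ Finset.Icc 1 (k - 1), w j = 1)
    (pbar : ℕ → Finset (Fin k) → ℝ)
    (hpbar : ∀ j Y, pbar j Y = (((k - 1).choose j : ℝ))⁻¹ * ∑ y' ∈ Yᶜ, q y')
    (y : Fin k) :
    q y = 1 - ∑ j ∈ Finset.Icc 1 (k - 1), ((k : ℝ) - 1) / (j : ℝ) *
        ∑ Y ∈ ((Finset.univ : Finset (Fin k)).powersetCard j).filter (fun Y => y ∈ Y),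
          w j * pbar j Y := by
  have key : ∀ j ∈ Finset.Icc 1 (k-1),
      ((k : ℝ) - 1) / (j : ℝ) *
        ∑ Y ∈ ((Finset.univ : Finset (Fin k)).powersetCard j).filter (fun Y => y ∈ Y),
          w j * pbar j Y = w j * (1 - q y) := by
    intro j hj
    obtain ⟨hj1, hj2⟩ := Finset.mem_Icc.mp hj
    set S := ((Finset.univ : Finset (Fin k)).powersetCard j).filter (fun Y => y ∈ Y) with hS
    -- compute the double sum
    have hswap : ∑ Y ∈ S, ∑ y' ∈ Yᶜ, q y'
        = ∑ y' : Fin k, ((S.filter (fun Y => y' ∉ Y)).card : ℝ) * q y' := by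
      have h1 : ∀ Y : Finset (Fin k), ∑ y' ∈ Yᶜ, q y'
          = ∑ y' : Fin k, if y' ∉ Y then q y' else 0 := by
        intro Y
        rw [Finset.sum_ite, Finset.sum_const_zero, add_zero]
        congr 1
        ext a
        simp [Finset.mem_compl]
      simp_rw [h1]
      rw [Finset.sum_comm]
      congr 1
      ext y'
      rw [Finset.sum_ite, Finset.sum_const_zero, add_zero, Finset.sum_const, nsmul_eq_mul]
    have hcount : ∀ y' : Fin k, (S.filter (fun Y => y' ∉ Y)).card
        = if y' = y then 0 else (k - 2).choose (j - 1) := by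
      intro y'
      by_cases h : y' = y
      · rw [if_pos h]
        rw [Finset.card_eq_zero, Finset.filter_eq_empty_iff]
        intro Y hY
        simp only [hS, Finset.mem_filter] at hY
        simp [h, hY.2]
      · rw [if_neg h, ← count_aux k j hj1 y y' h]
        congr 1
        rw [hS, Finset.filter_filter]
    have hsum2 : ∑ y' : Fin k, ((S.filter (fun Y => y' ∉ Y)).card : ℝ) * q y'
        = ((k - 2).choose (j - 1) : ℝ) * (1 - q y) := by
      rw [← Finset.add_sum_erase _ _ (Finset.mem_univ y)]
      rw [hcount y, if_pos rfl]
      simp only [Nat.cast_zero, zero_mul, zero_add]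
      have : ∀ y' ∈ Finset.univ.erase y,
          ((S.filter (fun Y => y' ∉ Y)).card : ℝ) * q y'
          = ((k - 2).choose (j - 1) : ℝ) * q y' := by
        intro y' hy'
        rw [hcount y', if_neg (Finset.mem_erase.mp hy').1]
      rw [Finset.sum_congr rfl this, ← Finset.mul_sum,
        Finset.sum_erase_eq_sub (Finset.mem_univ y), hqsum]
    -- now the scalar computation
    have hjk : j ≤ k - 1 := hj2
    have hchoosepos : 0 < (k - 1).choose j := Nat.choose_pos hjk
    have hid : (k - 1) * (k - 2).choose (j - 1) = (k - 1).choose j * j := by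
      have := Nat.add_one_mul_choose_eq (k - 2) (j - 1)
      have h1 : k - 2 + 1 = k - 1 := by omega
      have h2 : j - 1 + 1 = j := by omega
      simpa only [Nat.succ_eq_add_one, h1, h2] using this
    have hsumpbar : ∑ Y ∈ S, w j * pbar j Y
        = w j * (((k - 1).choose j : ℝ))⁻¹ * (((k - 2).choose (j - 1) : ℝ) * (1 - q y)) := by
      simp_rw [hpbar]
      rw [← Finset.mul_sum, ← Finset.mul_sum, hswap, hsum2]
      ring
    rw [hsumpbar]
    have hkR : ((k : ℝ) - 1) = ((k - 1 : ℕ) : ℝ) := by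
      push_cast [Nat.cast_sub (by omega : 1 ≤ k)]; ring
    have hjne : (j : ℝ) ≠ 0 := Nat.cast_ne_zero.mpr (by omega)
    have hcne : (((k - 1).choose j : ℝ)) ≠ 0 := Nat.cast_ne_zero.mpr hchoosepos.ne'
    have hidR : ((k : ℝ) - 1) * ((k - 2).choose (j - 1) : ℝ)
        = ((k - 1).choose j : ℝ) * (j : ℝ) := by
      rw [hkR]
      exact_mod_cast congrArg (Nat.cast : ℕ → ℝ) hid
    have h1 : ((k : ℝ) - 1) / (j : ℝ) * ((((k - 1).choose j : ℝ))⁻¹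
        * ((k - 2).choose (j - 1) : ℝ)) = 1 := by
      rw [div_eq_mul_inv]
      field_simp
      linear_combination hidR
    linear_combination (w j * (1 - q y)) * h1
  rw [Finset.sum_congr rfl key]
  have : ∑ j ∈ Finset.Icc 1 (k-1), w j * (1 - q y)
      = (∑ j ∈ Finset.Icc 1 (k-1), w j) * (1 - q y) := by
    rw [Finset.sum_mul]
  rw [this, hwsum]
  ring
end

section
/- Let k ≥ 2, let q : Fin k → ℝ be a class-posterior vector (q ≥ 0, Σ_y q(y) = 1), let w : {1,…,k−1} → ℝ be nonnegative with Σ_{j=1}^{k−1} w_j = 1, and let ℓ : Fin k → ℝ be an arbitrary loss vector. For each j and each subset Ȳ ⊆ Fin k with |Ȳ| = j define p̄_j(Ȳ) = (1/C(k−1,j)) Σ_{y' ∉ Ȳ} q(y') and the MCL loss L̄_j(ℓ, Ȳ) = Σ_{y ∉ Ȳ} ℓ(y) − ((k−1−j)/j) Σ_{y' ∈ Ȳ} ℓ(y'). Then the ordinary risk equals the complementary risk: Σ_{y=1}^k q(y) ℓ(y) = Σ_{j=1}^{k−1} w_j · Σ_{Ȳ : |Ȳ|=j} p̄_j(Ȳ)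 · L̄_j(ℓ, Ȳ). (Theorem 3: the unbiased risk estimator, stated conditionally on the instance x with ℓ(y) = L(f(x), y).) -/
/-!
Swapping the sums over `Ȳ` and over the true label `y`, it suffices that the MCL loss is
unbiased for each fixed `y`: the average of `L̄_j(ℓ, Ȳ)` over the `C(k-1, j)` sets `Ȳ ∌ y` of
size `j` is `ℓ(y)`. Indeed `ℓ(y)` appears in every such `L̄_j(ℓ, Ȳ)` with coefficient `1`,
while a label `z ≠ y` is outside `Ȳ` for `C(k-2, j)` of them and inside for `C(k-2, j-1)`,
and `C(k-2, j) = ((k-1-j)/j) C(k-2, j-1)`. The size prior `w` then only averages equal values.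
-/

open Finset

theorem Finset.sum_powersetCard_sum {α M : Type*} [DecidableEq α] [AddCommMonoid M]
    (t : Finset α) {n : ℕ} (hn : 1 ≤ n) (f : α → M) :
    ∑ Y ∈ t.powersetCard n, ∑ z ∈ Y, f z = (#t - 1).choose (n - 1) • ∑ z ∈ t, f z := by
  rw [sum_comm' (t' := t) (s' := fun z => (t.powersetCard n).filter ({z} ⊆ ·))
    (fun Y z => by simp only [mem_filter, mem_powersetCard, singleton_subset_iff]; grind),
    smul_sum]
  refine sum_congr rfl fun z hz => ?_
  rw [sum_const, card_filter_powersetCard_subset _ _ _ (singleton_subset_iff.mpr hz)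
    (by simpa using hn), card_singleton]

theorem Finset.sum_powersetCard_sum_compl_mul {α R : Type*} [Fintype α] [DecidableEq α]
    [CommSemiring R] (j : ℕ) (q : α → R) (g : Finset α → R) :
    ∑ Y ∈ univ.powersetCard j, (∑ y ∈ Yᶜ, q y) * g Y =
      ∑ y, q y * ∑ Y ∈ ({y}ᶜ : Finset α).powersetCard j, g Y := by
  simp only [sum_mul, mul_sum]
  exact sum_comm' fun Y y => by simp [and_comm]

section MCL

variable {α : Type*} [Fintype α] [DecidableEq α]

noncomputable def mclLoss (ℓ : α → ℝ) (j : ℕ) (Y : Finset α) : ℝ :=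
  ∑ y ∈ Yᶜ, ℓ y - ((Fintype.card α - 1 - j : ℕ) : ℝ) / j * ∑ y ∈ Y, ℓ y

theorem sum_mclLoss_powersetCard_compl_singleton (ℓ : α → ℝ) (y : α) {j : ℕ}
    (hj : 1 ≤ j) (hjn : j ≤ Fintype.card α - 1) :
    ∑ Y ∈ ({y}ᶜ : Finset α).powersetCard j, mclLoss ℓ j Y =
      (Fintype.card α - 1).choose j * ℓ y := by
  set n := Fintype.card α
  set A := ∑ z ∈ ({y}ᶜ : Finset α), ℓ z
  have hcard : #({y}ᶜ : Finset α) = n - 1 := by simp [card_compl, n]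
  have hcompl (Y : Finset α) : ∑ z ∈ Yᶜ, ℓ z = ℓ y + A - ∑ z ∈ Y, ℓ z := by
    rw [← sum_singleton ℓ y, sum_add_sum_compl, ← sum_add_sum_compl Y ℓ]
    ring
  have hchoose : (j : ℝ) * (n - 1).choose j = ((n - 1 : ℕ) : ℝ) * (n - 2).choose (j - 1) := by
    have := Nat.add_one_mul_choose_eq (n - 2) (j - 1)
    rw [show n - 2 + 1 = n - 1 by omega, show j - 1 + 1 = j by omega] at this
    exact_mod_cast (this.trans (mul_comm _ _)).symm
  simp only [mclLoss]
  rw [sum_sub_distrib, sum_congr rfl fun Y _ => hcompl Y, ← mul_sum, sum_sub_distrib, sum_const,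
    card_powersetCard, sum_powersetCard_sum _ hj, hcard, show n - 1 - 1 = n - 2 by omega,
    Nat.cast_sub hjn]
  have hj0 : (j : ℝ) ≠ 0 := by positivity
  field_simp
  linear_combination A * hchoose

end MCL

theorem stmt7_general (k : ℕ) (q : Fin k → ℝ)
    (w : ℕ → ℝ)
    (hwsum : ∑ j ∈ Finset.Icc 1 (k - 1), w j = 1)
    (ℓ : Fin k → ℝ)
    (pbar : ℕ → Finset (Fin k) → ℝ)
    (hpbar : ∀ j Y, pbar j Y = (((k - 1).choose j : ℝ))⁻¹ * ∑ y' ∈ Yᶜ, q y')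
    (Lbar : ℕ → Finset (Fin k) → ℝ)
    (hLbar : ∀ j Y, Lbar j Y =
      (∑ y ∈ Yᶜ, ℓ y) - ((k - 1 - j : ℕ) : ℝ) / (j : ℝ) * ∑ y' ∈ Y, ℓ y') :
    ∑ y, q y * ℓ y = ∑ j ∈ Finset.Icc 1 (k - 1), w j *
        ∑ Y ∈ (Finset.univ : Finset (Fin k)).powersetCard j, pbar j Y * Lbar j Y := by
  have hrisk : ∀ j ∈ Icc 1 (k - 1),
      ∑ Y ∈ univ.powersetCard j, pbar j Y * Lbar j Y = ∑ y, q y * ℓ y := by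
    intro j hj
    obtain ⟨hj1, hjk⟩ := mem_Icc.mp hj
    have hC : ((k - 1).choose j : ℝ) ≠ 0 := by exact_mod_cast (Nat.choose_pos hjk).ne'
    calc ∑ Y ∈ univ.powersetCard j, pbar j Y * Lbar j Y
        = ((k - 1).choose j : ℝ)⁻¹ *
            ∑ Y ∈ univ.powersetCard j, (∑ y ∈ Yᶜ, q y) * mclLoss ℓ j Y := by
          rw [mul_sum]
          refine sum_congr rfl fun Y _ => ?_
          rw [hpbar, hLbar, mclLoss, Fintype.card_fin, mul_assoc]
      _ = ((k - 1).choose j : ℝ)⁻¹ * ∑ y, q y * ((k - 1).choose j * ℓ y) := by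
          rw [sum_powersetCard_sum_compl_mul]
          simp only [sum_mclLoss_powersetCard_compl_singleton ℓ _ hj1 (by simpa using hjk),
            Fintype.card_fin]
      _ = ∑ y, q y * ℓ y := by
          rw [mul_sum]
          exact sum_congr rfl fun y _ => by field_simp
  rw [sum_congr rfl fun j hj => congrArg (w j * ·) (hrisk j hj), ← sum_mul, hwsum, one_mul]

/-- **Theorem 3** (unbiased risk estimator, conditionally on the instance `x`): for any
loss vector `ℓ`, the ordinary risk equals the complementary risk:
`∑_y q(y) ℓ(y) = ∑_{j=1}^{k−1} w j ∑_{Ȳ : |Ȳ| = j} p̄_j(Ȳ) · L̄_j(ℓ, Ȳ)`, where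
`p̄_j(Ȳ) = (1/C(k−1,j)) ∑_{y' ∉ Ȳ} q(y')` and
`L̄_j(ℓ, Ȳ) = ∑_{y ∉ Ȳ} ℓ(y) − ((k−1−j)/j) ∑_{y' ∈ Ȳ} ℓ(y')`. -/
theorem stmt7 (k : ℕ) (hk : 2 ≤ k) (q : Fin k → ℝ)
    (hq : ∀ y, 0 ≤ q y) (hqsum : ∑ y, q y = 1)
    (w : ℕ → ℝ) (hw : ∀ j ∈ Finset.Icc 1 (k - 1), 0 ≤ w j)
    (hwsum : ∑ j ∈ Finset.Icc 1 (k - 1), w j = 1)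
    (ℓ : Fin k → ℝ)
    (pbar : ℕ → Finset (Fin k) → ℝ)
    (hpbar : ∀ j Y, pbar j Y = (((k - 1).choose j : ℝ))⁻¹ * ∑ y' ∈ Yᶜ, q y')
    (Lbar : ℕ → Finset (Fin k) → ℝ)
    (hLbar : ∀ j Y, Lbar j Y =
      (∑ y ∈ Yᶜ, ℓ y) - ((k - 1 - j : ℕ) : ℝ) / (j : ℝ) * ∑ y' ∈ Y, ℓ y') :
    ∑ y, q y * ℓ y = ∑ j ∈ Finset.Icc 1 (k - 1), w j *
        ∑ Y ∈ (Finset.univ : Finset (Fin k)).powersetCard j, pbar j Y * Lbar j Y :=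
  stmt7_general k q w hwsum ℓ pbar hpbar Lbar hLbar
end

section
/- Let k ≥ 2 and let p : Fin k → ℝ be a probability vector (p ≥ 0, Σ_y p(y) = 1), and define the MAE loss vector ℓ(y) = 2 − 2·p(y). Then for every subset Ȳ ⊆ Fin k with |Ȳ| = s, 1 ≤ s ≤ k−1: L̄_s(ℓ, Ȳ) = ((2k−2)/s) · (1 − Σ_{y ∉ Ȳ} p(y)). (The MCL risk with MAE is, up to the positive factor (2k−2)/s, exactly L′_MAE(Ȳ) = 1 − Σ_{y ∉ Ȳ} p(y); Eq. (10).) -/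
open Finset

/-- Eq. (10): with the MAE loss `ℓ(y) = 2 − 2 p(y)` built from a probability vector `p`,
the MCL loss on a set `Ȳ` of size `s` equals
`((2k−2)/s) · (1 − ∑_{y ∉ Ȳ} p(y))`, i.e. `((2k−2)/s) · L′_MAE(Ȳ)`. -/
theorem stmt11 (k s : ℕ) (hk : 2 ≤ k) (hs1 : 1 ≤ s) (hs2 : s ≤ k - 1)
    (p : Fin k → ℝ) (hp : ∀ y, 0 ≤ p y) (hpsum : ∑ y, p y = 1)
    (ℓ : Fin k → ℝ) (hℓ : ∀ y, ℓ y = 2 - 2 * p y)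
    (Y : Finset (Fin k)) (hY : Y.card = s) :
    (∑ y ∈ Yᶜ, ℓ y) - ((k - 1 - s : ℕ) : ℝ) / (s : ℝ) * (∑ y' ∈ Y, ℓ y')
      = ((2 * k - 2 : ℕ) : ℝ) / (s : ℝ) * (1 - ∑ y ∈ Yᶜ, p y) := by
  have hsk : s ≤ k := by omega
  have hcard : Yᶜ.card = k - s := by
    simp [card_compl, hY]
  set A := ∑ y ∈ Yᶜ, p y with hA
  have hYsum : ∑ y ∈ Y, p y = 1 - A := by
    have h := Finset.sum_add_sum_compl Y p
    rw [hpsum] at h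
    linarith
  have h1 : ∑ y ∈ Yᶜ, ℓ y = 2 * ((k : ℝ) - s) - 2 * A := by
    simp only [hℓ]
    rw [Finset.sum_sub_distrib, Finset.sum_const, hcard, ← Finset.mul_sum, ← hA,
      nsmul_eq_mul, Nat.cast_sub hsk]
    push_cast
    ring
  have h2 : ∑ y' ∈ Y, ℓ y' = 2 * (s : ℝ) - 2 * (1 - A) := by
    simp only [hℓ]
    rw [Finset.sum_sub_distrib, Finset.sum_const, hY, ← Finset.mul_sum, hYsum]
    push_cast
    ring
  have hc1 : ((k - 1 - s : ℕ) : ℝ) = (k : ℝ) - 1 - s := by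
    push_cast [Nat.cast_sub (by omega : 1 + s ≤ k), Nat.sub_sub]
    ring
  have hc2 : ((2 * k - 2 : ℕ) : ℝ) = 2 * (k : ℝ) - 2 := by
    push_cast [Nat.cast_sub (by omega : 2 ≤ 2 * k)]
    ring
  have hs0 : (s : ℝ) ≠ 0 := by positivity
  rw [h1, h2, hc1, hc2]
  field_simp
  ring
end
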